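/- Let A₀ = {0, 1, 2, ..., k−2} where k ≥ 2 is even, and let S = a^{A₀} ∪ {b} ⊆ BS(1,2) (so |S| = k). Then |S²| = 3.5k − 4, i.e., |S²| = (7k − 8)/2. -/

import Mathlib

open Pointwise

def BSRel (n : ℤ) : Set (FreeGroup Bool) :=
  {FreeGroup.of true * FreeGroup.of false * (FreeGroup.of false * FreeGroup.of true ^ n)⁻¹}

/-- The Baumslag–Solitar group `BS(1,n) = ⟨a, b ∣ a b = b aⁿ⟩`. -/
abbrev BS (n : ℤ) : Type := PresentedGroup (BSRel n)

noncomputable instance (n : ℤ) : DecidableEq (BS n) := Classical.decEq _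

/-- The generator `a` of `BS(1,n)`. -/
def bsa (n : ℤ) : BS n := PresentedGroup.of true

/-- The generator `b` of `BS(1,n)`. -/
def bsb (n : ℤ) : BS n := PresentedGroup.of false

/-!
By `aⁱ b = b a^(2i)`, `S² = a^[0, 2k - 4] ∪ b a^(A₀ ∪ 2A₀) ∪ {b²}`. The exponent sum of `b` separates
the three pieces, and `a` has infinite order (`BS(1,2)` acts on `ℚ` by `a : x ↦ x + 1`,
`b : x ↦ x / 2`), so `|S²| = (2k - 3) + (2(k - 1) - k/2) + 1`: `A₀ ∩ 2A₀` consists of the `k/2` even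
elements of `A₀`.
-/

theorem Finset.image_pow_range_mul_image_pow_range {M : Type*} [Monoid M] [DecidableEq M]
    (g : M) {m l : ℕ} (hm : 0 < m) (hl : 0 < l) :
    (range m).image (g ^ ·) * (range l).image (g ^ ·) = (range (m + l - 1)).image (g ^ ·) := by
  ext x
  simp only [mem_mul, mem_image, mem_range]
  constructor
  · rintro ⟨_, ⟨i, hi, rfl⟩, _, ⟨j, hj, rfl⟩, rfl⟩
    exact ⟨i + j, by omega, pow_add _ _ _⟩
  · rintro ⟨s, hs, rfl⟩
    obtain ⟨i, j, hi, hj, rfl⟩ : ∃ i j, i < m ∧ j < l ∧ s = i + j :=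
      ⟨min s (m - 1), s - min s (m - 1), by omega, by omega, by omega⟩
    exact ⟨_, ⟨i, hi, rfl⟩, _, ⟨j, hj, rfl⟩, (pow_add _ _ _).symm⟩

theorem Finset.card_image_two_mul_range_union_range (l : ℕ) :
    ((range l).image (2 * ·) ∪ range l).card + (l + 1) / 2 = 2 * l := by
  have hinter : (range l).image (2 * ·) ∩ range l = (range ((l + 1) / 2)).image (2 * ·) := by
    ext x
    simp only [mem_inter, mem_image, mem_range]
    constructor
    · rintro ⟨⟨i, -, rfl⟩, hx⟩
      exact ⟨i, by omega, rfl⟩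
    · rintro ⟨i, hi, rfl⟩
      exact ⟨⟨i, by omega, rfl⟩, by omega⟩
  have hinj : Function.Injective (2 * · : ℕ → ℕ) := fun i j h => by simpa using h
  have := card_union_add_card_inter ((range l).image (2 * ·)) (range l)
  rw [hinter, card_image_of_injective _ hinj, card_image_of_injective _ hinj, card_range,
    card_range] at this
  omega

section BaumslagSolitar

theorem bsa_mul_bsb (n : ℤ) : bsa n * bsb n = bsb n * bsa n ^ n := by
  have hrel : PresentedGroup.mk (BSRel n)
      (FreeGroup.of true * FreeGroup.of false * (FreeGroup.of false * FreeGroup.of true ^ n)⁻¹) = 1 :=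
    (QuotientGroup.eq_one_iff _).2 (Subgroup.subset_normalClosure rfl)
  rw [map_mul, map_mul, map_inv, map_mul, map_zpow, mul_inv_eq_one] at hrel
  exact hrel

theorem bsa_zpow_mul_bsb (n i : ℤ) : bsa n ^ i * bsb n = bsb n * bsa n ^ (n * i) := by
  have hconj : (bsb n)⁻¹ * bsa n * (bsb n)⁻¹⁻¹ = bsa n ^ n := by
    rw [inv_inv, mul_assoc, inv_mul_eq_iff_eq_mul, bsa_mul_bsb]
  rw [zpow_mul, ← hconj, conj_zpow, inv_inv, ← mul_assoc, ← mul_assoc, mul_inv_cancel, one_mul]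

def bsbExponentSum (n : ℤ) : BS n →* Multiplicative ℤ :=
  PresentedGroup.toGroup (f := fun x => if x then 1 else .ofAdd 1) <| by
    rintro r rfl
    simp

variable {n : ℤ}

@[simp] theorem bsbExponentSum_bsa : bsbExponentSum n (bsa n) = 1 :=
  PresentedGroup.toGroup.of _

@[simp] theorem bsbExponentSum_bsb : bsbExponentSum n (bsb n) = .ofAdd 1 :=
  PresentedGroup.toGroup.of _

noncomputable def bsToPerm (hn : n ≠ 0) : BS n →* Equiv.Perm ℚ :=
  PresentedGroup.toGroup (f := fun x => if x then Equiv.addRight (1 : ℚ)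
    else Equiv.mulLeft₀ (n : ℚ)⁻¹ (inv_ne_zero (Int.cast_ne_zero.2 hn))) <| by
    rintro r rfl
    ext x
    simp [field]

theorem bsToPerm_bsa_pow (hn : n ≠ 0) (i : ℕ) (x : ℚ) : bsToPerm hn (bsa n ^ i) x = x + i := by
  induction i generalizing x with
  | zero => simp
  | succ i ih =>
    rw [pow_succ', map_mul, Equiv.Perm.mul_apply, ih]
    simp [bsToPerm, bsa, add_assoc]

theorem bsa_pow_injective (hn : n ≠ 0) : Function.Injective (bsa n ^ · : ℕ → BS n) := by
  intro i j h
  have h0 := congrArg (bsToPerm hn · 0) h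
  simpa only [bsToPerm_bsa_pow, zero_add, Nat.cast_inj] using h0

theorem bsa_pow_ne_bsb_mul_bsa_pow (i j : ℕ) : bsa n ^ i ≠ bsb n * bsa n ^ j := by
  intro h
  simpa using congrArg (fun g => (bsbExponentSum n g).toAdd) h

theorem bsa_pow_ne_bsb_mul_bsb (i : ℕ) : bsa n ^ i ≠ bsb n * bsb n := by
  intro h
  simpa using congrArg (fun g => (bsbExponentSum n g).toAdd) h

theorem card_bsa_pow_union_bsb_mul_bsa_pow_union (hn : n ≠ 0) (I J : Finset ℕ) :
    (I.image (bsa n ^ ·) ∪ J.image (bsb n * bsa n ^ ·) ∪ {bsb n * bsb n}).card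
      = I.card + J.card + 1 := by
  have hdisj : Disjoint (I.image (bsa n ^ ·)) (J.image (bsb n * bsa n ^ ·)) := by
    simp only [Finset.disjoint_left, Finset.mem_image]
    rintro _ ⟨i, -, rfl⟩ ⟨j, -, h⟩
    exact bsa_pow_ne_bsb_mul_bsa_pow i j h.symm
  have hbb : bsb n * bsb n ∉ I.image (bsa n ^ ·) ∪ J.image (bsb n * bsa n ^ ·) := by
    simp only [Finset.mem_union, Finset.mem_image, not_or, not_exists, not_and]
    refine ⟨fun i _ h => bsa_pow_ne_bsb_mul_bsb i h, fun j _ h => ?_⟩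
    exact bsa_pow_ne_bsb_mul_bsa_pow j 0 (by simpa using mul_left_cancel h)
  rw [Finset.card_union_of_disjoint (Finset.disjoint_singleton_right.2 hbb),
    Finset.card_union_of_disjoint hdisj, Finset.card_image_of_injective _ (bsa_pow_injective hn),
    Finset.card_image_of_injective _ fun i j h => bsa_pow_injective hn (mul_left_cancel h),
    Finset.card_singleton]

end BaumslagSolitar

theorem stmt13 (k : ℕ) (hk : 2 ≤ k) (hke : Even k) (S : Finset (BS 2))
    (hS : S = (Finset.range (k - 1)).image (fun i => bsa 2 ^ i) ∪ {bsb 2}) :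
    2 * (S * S).card = 7 * k - 8 := by
  set A := (Finset.range (k - 1)).image (bsa 2 ^ ·)
  have hAA : A * A = (Finset.range (2 * k - 3)).image (bsa 2 ^ ·) := by
    rw [Finset.image_pow_range_mul_image_pow_range _ (by omega) (by omega)]
    congr 2
    omega
  have hAb : A * {bsb 2} = ((Finset.range (k - 1)).image (2 * ·)).image (bsb 2 * bsa 2 ^ ·) := by
    refine Finset.image₂_singleton_right.trans ?_
    rw [Finset.image_image, Finset.image_image]
    congr 1
    funext i
    exact_mod_cast bsa_zpow_mul_bsb 2 i
  have hbA : {bsb 2} * A = (Finset.range (k - 1)).image (bsb 2 * bsa 2 ^ ·) :=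
    Finset.image₂_singleton_left.trans (Finset.image_image ..)
  have hSS : S * S = (Finset.range (2 * k - 3)).image (bsa 2 ^ ·) ∪
      ((Finset.range (k - 1)).image (2 * ·) ∪ Finset.range (k - 1)).image (bsb 2 * bsa 2 ^ ·) ∪
      {bsb 2 * bsb 2} := by
    rw [hS, Finset.union_mul, Finset.mul_union, Finset.mul_union, Finset.singleton_mul_singleton,
      hAA, hAb, hbA]
    simp only [Finset.image_union, Finset.union_assoc]
  have hcard := Finset.card_image_two_mul_range_union_range (k - 1)
  rw [hSS, card_bsa_pow_union_bsb_mul_bsa_pow_union two_ne_zero, Finset.card_range]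
  obtain ⟨t, rfl⟩ := hke
  omega
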